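/- arXiv:2601.13787 — 4 statements merged into one kernel-verified Lean document; each statement's English description precedes it below -/
import Mathlib

section
/- Let g : [a,b] → [0,∞] be left-lower-semicontinuous, i.e., for every T ∈ (a,b], g(T) ≤ liminf_{t→T⁻} g(t). Suppose also that for each T ∈ [a,b) and each ε > 0 there exists t ∈ (T, min(T+ε, b)] with g(t) ≤ g(T). Then g(b) ≤ g(a). -/
/-!
Let `T` be the supremum of `S = {t ∈ [a,b] | g t ≤ g a}`. Either `T ∈ S`, or `T` is a limit from
the left of points of `S`, and then left lower semicontinuity gives `g T ≤ g a` as well. A point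
`t ∈ (T, b]` with `g t ≤ g T` would lie in `S` above its supremum, so `T = b`.
-/

open Filter Set Topology

section

variable {α β : Type*} [TopologicalSpace α] [CompleteLattice β]

theorem IsLUB.frequently_nhdsLT_mem [LinearOrder α] [OrderTopology α] {a : α} {s : Set α}
    (ha : IsLUB s a) (hs : s.Nonempty) (has : a ∉ s) : ∃ᶠ x in 𝓝[<] a, x ∈ s := by
  have := ha.frequently_mem hs
  rw [← Iio_insert, nhdsWithin_insert, frequently_sup, frequently_pure] at this
  exact this.resolve_left has

theorem IsLUB.le_of_le_liminf_nhdsLT [LinearOrder α] [OrderTopology α] {s : Set α} {T : α}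
    {g : α → β} {c : β} (hT : IsLUB s T) (hs : s.Nonempty) (hTs : T ∉ s)
    (hsc : ∀ x ∈ s, g x ≤ c) (hlsc : g T ≤ liminf g (𝓝[<] T)) : g T ≤ c :=
  hlsc.trans <| liminf_le_of_frequently_le' <| (hT.frequently_nhdsLT_mem hs hTs).mono hsc

theorem le_of_le_liminf_nhdsLT_of_exists_gt_le [ConditionallyCompleteLinearOrder α]
    [OrderTopology α] {a b : α} (hab : a ≤ b) {g : α → β}
    (hlsc : ∀ T ∈ Ioc a b, g T ≤ liminf g (𝓝[<] T))
    (hstep : ∀ T ∈ Ico a b, ∃ t ∈ Ioc T b, g t ≤ g T) :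
    g b ≤ g a := by
  set S := {t ∈ Icc a b | g t ≤ g a}
  have haS : a ∈ S := ⟨⟨le_rfl, hab⟩, le_rfl⟩
  obtain ⟨T, hS⟩ : ∃ T, IsLUB S T := ⟨_, isLUB_csSup ⟨a, haS⟩ ⟨b, fun t ht ↦ ht.1.2⟩⟩
  have haT : a ≤ T := hS.1 haS
  have hTb : T ≤ b := hS.2 fun t ht ↦ ht.1.2
  have hgT : g T ≤ g a := by
    by_cases hTS : T ∈ S
    · exact hTS.2
    · have haT' : a < T := haT.lt_of_ne <| by rintro rfl; exact hTS haS
      exact hS.le_of_le_liminf_nhdsLT ⟨a, haS⟩ hTS (fun t ht ↦ ht.2) (hlsc T ⟨haT', hTb⟩)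
  obtain rfl : T = b := by
    by_contra hTb'
    obtain ⟨t, ⟨hTt, htb⟩, hgt⟩ := hstep T ⟨haT, hTb.lt_of_ne hTb'⟩
    exact hTt.not_ge <| hS.1 ⟨⟨haT.trans hTt.le, htb⟩, hgt.trans hgT⟩
  exact hgT

end

/-- Lemma 3.2 ("general-lemma"), endpoint inequality: a left-lower-semicontinuous
function `g : [a,b] → [0,∞]` such that to the right of each `T ∈ [a,b)` there are
points `t` arbitrarily close to `T` with `g t ≤ g T` satisfies `g b ≤ g a`. -/
theorem stmt0 (a b : ℝ) (hab : a < b) (g : ℝ → ENNReal)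
    (hlsc : ∀ T ∈ Set.Ioc a b, g T ≤ Filter.liminf g (nhdsWithin T (Set.Iio T)))
    (hstep : ∀ T ∈ Set.Ico a b, ∀ ε > 0,
      ∃ t ∈ Set.Ioc T (min (T + ε) b), g t ≤ g T) :
    g b ≤ g a := by
  refine le_of_le_liminf_nhdsLT_of_exists_gt_le hab.le hlsc fun T hT ↦ ?_
  obtain ⟨t, ⟨hTt, htb⟩, hgt⟩ := hstep T hT 1 one_pos
  exact ⟨t, ⟨hTt, htb.trans (min_le_right _ _)⟩, hgt⟩
end

section
/- Let g : [a,b] → [0,∞] be left-lower-semicontinuous on [a,b], and suppose that for each T ∈ [a,b) there exist t > T arbitrarily close to T with g(t) ≤ g(T). Then g is a decreasing (antitone) function on [a,b]: for all s ≤ t in [a,b], g(t) ≤ g(s). -/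
open Filter Set Topology

/-!
Fix `s ≤ t` and let `c` be the supremum of the points `u ∈ [s, t]` with `g u ≤ g s`.
If `c` is not itself such a point, such points accumulate at `c` from the left, so
left-lower-semicontinuity gives `g c ≤ g s` anyway. If `c < t`, the hypothesis at `c`
produces a point `u ∈ (c, t]` with `g u ≤ g c ≤ g s`, contradicting maximality; so `c = t`.
-/

/-- A variant of `IsClosed.mem_of_ge_of_forall_exists_gt` in which closedness of `s` is
weakened to: every `x ∈ (a, b]` that `s` accumulates at from the left belongs to `s`. -/
theorem mem_of_ge_of_forall_exists_gt_of_frequently_nhdsLT {α : Type*}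
    [ConditionallyCompleteLinearOrder α] [TopologicalSpace α] [OrderTopology α]
    {a b : α} {s : Set α} (ha : a ∈ s) (hab : a ≤ b)
    (hlt : ∀ x ∈ Ioc a b, (∃ᶠ y in 𝓝[<] x, y ∈ s) → x ∈ s)
    (hgt : ∀ x ∈ s ∩ Ico a b, (s ∩ Ioc x b).Nonempty) : b ∈ s := by
  set S := s ∩ Icc a b
  have haS : a ∈ S := ⟨ha, left_mem_Icc.2 hab⟩
  have hbdd : BddAbove S := ⟨b, fun _ hx => hx.2.2⟩
  set c := sSup S
  have hac : a ≤ c := le_csSup hbdd haS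
  have hcb : c ≤ b := csSup_le ⟨a, haS⟩ fun _ hx => hx.2.2
  have hcs : c ∈ s := by
    have hfreq := (isLUB_csSup ⟨a, haS⟩ hbdd).frequently_mem ⟨a, haS⟩
    rw [← Iio_insert, nhdsWithin_insert, frequently_sup, frequently_pure] at hfreq
    rcases hfreq with hcS | hfreq
    · exact hcS.1
    rcases hac.eq_or_lt with hac | hac
    · exact hac ▸ ha
    · exact hlt c ⟨hac, hcb⟩ (hfreq.mono fun _ hy => hy.1)
  rcases hcb.eq_or_lt with hcb | hcb
  · exact hcb ▸ hcs
  obtain ⟨x, hxs, hcx, hxb⟩ := hgt c ⟨hcs, hac, hcb⟩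
  exact absurd (le_csSup hbdd ⟨hxs, hac.trans hcx.le, hxb⟩) (not_le.2 hcx)

theorem antitoneOn_Icc_of_le_liminf_nhdsLT {α β : Type*}
    [ConditionallyCompleteLinearOrder α] [TopologicalSpace α] [OrderTopology α]
    [CompleteLinearOrder β] {a b : α} {g : α → β}
    (hlsc : ∀ T ∈ Ioc a b, g T ≤ liminf g (𝓝[<] T))
    (hstep : ∀ T ∈ Ico a b, ∀ u ∈ Ioc T b, ∃ t ∈ Ioc T u, g t ≤ g T) :
    AntitoneOn g (Icc a b) := by
  intro s hs t ht hst
  refine mem_of_ge_of_forall_exists_gt_of_frequently_nhdsLT (s := {u | g u ≤ g s})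
    le_rfl hst (fun x hx hfreq => ?_) (fun x hx => ?_)
  · exact (hlsc x ⟨hs.1.trans_lt hx.1, hx.2.trans ht.2⟩).trans
      (liminf_le_of_frequently_le hfreq)
  · obtain ⟨u, hu, hgu⟩ :=
      hstep x ⟨hs.1.trans hx.2.1, hx.2.2.trans_le ht.2⟩ t ⟨hx.2.2, ht.2⟩
    exact ⟨u, hgu.trans hx.1, hu⟩

theorem stmt1_general (a b : ℝ) (g : ℝ → ENNReal)
    (hlsc : ∀ T ∈ Set.Ioc a b, g T ≤ Filter.liminf g (nhdsWithin T (Set.Iio T)))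
    (hstep : ∀ T ∈ Set.Ico a b, ∀ ε > 0,
      ∃ t ∈ Set.Ioc T (min (T + ε) b), g t ≤ g T) :
    ∀ s ∈ Set.Icc a b, ∀ t ∈ Set.Icc a b, s ≤ t → g t ≤ g s := by
  refine fun s hs t ht hst =>
    antitoneOn_Icc_of_le_liminf_nhdsLT hlsc (fun T hT u hu => ?_) hs ht hst
  obtain ⟨t, ht, hgt⟩ := hstep T hT (u - T) (sub_pos.2 hu.1)
  rw [add_sub_cancel, min_eq_left hu.2] at ht
  exact ⟨t, ht, hgt⟩

/-- Lemma 3.2 ("general-lemma"): a left-lower-semicontinuous function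
`g : [a,b] → [0,∞]` such that to the right of each `T ∈ [a,b)` there are points
`t` arbitrarily close to `T` with `g t ≤ g T` is decreasing on `[a,b]`. -/
theorem stmt1 (a b : ℝ) (hab : a < b) (g : ℝ → ENNReal)
    (hlsc : ∀ T ∈ Set.Ioc a b, g T ≤ Filter.liminf g (nhdsWithin T (Set.Iio T)))
    (hstep : ∀ T ∈ Set.Ico a b, ∀ ε > 0,
      ∃ t ∈ Set.Ioc T (min (T + ε) b), g t ≤ g T) :
    ∀ s ∈ Set.Icc a b, ∀ t ∈ Set.Icc a b, s ≤ t → g t ≤ g s :=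
  stmt1_general a b g hlsc hstep
end

section
/- Let g : [a,b] → ℕ ∪ {∞} be lower semicontinuous. Let D ⊆ [a,b] be such that every T ∈ [a,b) is a limit from the right of points of D. Suppose that for every T ∈ [a,b], every positive integer n, and every sequence (t_i) in D with t_i > T, t_i → T, and g(t_i) ≥ n for all i, one has g(T) ≥ n. Then g is decreasing on [a,b]. -/
/-!
Fix `m : ℕ` with `g s ≤ m` and suppose `m < g t` for some `t ≥ s`. By lower semicontinuity the
sublevel set `C = {u ∈ [s, t] | g u ≤ m}` is compact, so it contains its supremum `c`, and
`c < t`. Every point of `D` in `(c, t)` then has `g > m`, and passing to the limit along a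
sequence of such points decreasing to `c` gives `g c > m`, a contradiction.
-/

open Filter Set Topology

theorem lowerSemicontinuousOn_of_le_liminf_diff_singleton {α γ : Type*} [TopologicalSpace α]
    [CompleteLinearOrder γ] {f : α → γ} {s : Set α}
    (h : ∀ x ∈ s, f x ≤ liminf f (𝓝[s \ {x}] x)) : LowerSemicontinuousOn f s := by
  intro x hx y hy
  rw [← insert_eq_of_mem hx, ← insert_sdiff_singleton]
  exact mem_nhdsWithin_insert.2 ⟨hy, lowerSemicontinuousWithinAt_iff_le_liminf.2 (h x hx) y hy⟩

theorem exists_seq_mem_Ioo_tendsto {D : Set ℝ} {T δ : ℝ} (hδ : 0 < δ)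
    (hD : ∀ ε > 0, ∃ t ∈ D, T < t ∧ t < T + ε) :
    ∃ u : ℕ → ℝ, (∀ i, u i ∈ D ∩ Ioo T (T + δ)) ∧ Tendsto u atTop (𝓝 T) := by
  refine mem_closure_iff_seq_limit.1 (Metric.mem_closure_iff.2 fun ε hε => ?_)
  obtain ⟨u, huD, hTu, hu⟩ := hD (min ε δ) (lt_min hε hδ)
  refine ⟨u, ⟨huD, hTu, by linarith [min_le_right ε δ]⟩, ?_⟩
  rw [Real.dist_eq, abs_sub_lt_iff]
  constructor <;> linarith [min_le_left ε δ]

section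

variable {a b : ℝ} {g : ℝ → ℕ∞} {D : Set ℝ}

theorem natCast_lt_of_forall_mem_Ioo_natCast_lt
    (hDacc : ∀ T ∈ Ico a b, ∀ ε > 0, ∃ t ∈ D, T < t ∧ t < T + ε)
    (hlim : ∀ T ∈ Icc a b, ∀ n : ℕ, 0 < n → ∀ t : ℕ → ℝ,
      (∀ i, t i ∈ D) → (∀ i, T < t i) → Tendsto t atTop (𝓝 T) →
      (∀ i, (n : ℕ∞) ≤ g (t i)) → (n : ℕ∞) ≤ g T)
    {T δ : ℝ} (hT : T ∈ Ico a b) (hδ : 0 < δ) {m : ℕ}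
    (h : ∀ u ∈ D ∩ Ioo T (T + δ), (m : ℕ∞) < g u) : (m : ℕ∞) < g T := by
  obtain ⟨u, hu, hu_lim⟩ := exists_seq_mem_Ioo_tendsto hδ (hDacc T hT)
  have hsucc {x : ℕ∞} : ((m + 1 : ℕ) : ℕ∞) ≤ x ↔ (m : ℕ∞) < x := by
    push_cast
    exact ENat.add_one_le_iff (ENat.natCast_ne_top m)
  exact hsucc.1 <| hlim T (Ico_subset_Icc_self hT) (m + 1) m.succ_pos u (fun i => (hu i).1)
    (fun i => (hu i).2.1) hu_lim fun i => hsucc.2 (h _ (hu i))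

theorem le_natCast_of_le_of_le_natCast (hlsc : LowerSemicontinuousOn g (Icc a b))
    (hDacc : ∀ T ∈ Ico a b, ∀ ε > 0, ∃ t ∈ D, T < t ∧ t < T + ε)
    (hlim : ∀ T ∈ Icc a b, ∀ n : ℕ, 0 < n → ∀ t : ℕ → ℝ,
      (∀ i, t i ∈ D) → (∀ i, T < t i) → Tendsto t atTop (𝓝 T) →
      (∀ i, (n : ℕ∞) ≤ g (t i)) → (n : ℕ∞) ≤ g T)
    {s t : ℝ} (hs : s ∈ Icc a b) (ht : t ∈ Icc a b) (hst : s ≤ t) {m : ℕ}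
    (hm : g s ≤ m) : g t ≤ m := by
  by_contra! hlt
  set C := Icc s t ∩ g ⁻¹' Iic (m : ℕ∞)
  have hC : IsCompact C :=
    (hlsc.mono (Icc_subset_Icc hs.1 ht.2)).isCompact_inter_preimage_Iic isCompact_Icc _
  have hcC : sSup C ∈ C := hC.sSup_mem ⟨s, ⟨le_rfl, hst⟩, hm⟩
  have hct : sSup C < t := hcC.1.2.lt_of_ne fun h => hlt.not_ge (h ▸ hcC.2)
  refine (natCast_lt_of_forall_mem_Ioo_natCast_lt hDacc hlim ⟨hs.1.trans hcC.1.1, hct.trans_le ht.2⟩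
    (sub_pos.2 hct) fun u hu => ?_).not_ge hcC.2
  have hu_Icc : u ∈ Icc s t := ⟨hcC.1.1.trans hu.2.1.le, by linarith [hu.2.2]⟩
  exact not_le.1 fun hgu => notMem_of_csSup_lt hu.2.1 hC.bddAbove ⟨hu_Icc, hgu⟩

end

theorem stmt4_general (a b : ℝ) (g : ℝ → ℕ∞) (D : Set ℝ)
    (hlsc : ∀ T ∈ Set.Icc a b,
      g T ≤ Filter.liminf g (nhdsWithin T (Set.Icc a b \ {T})))
    (hDacc : ∀ T ∈ Set.Ico a b, ∀ ε > 0, ∃ t ∈ D, T < t ∧ t < T + ε)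
    (hlim : ∀ T ∈ Set.Icc a b, ∀ n : ℕ, 0 < n → ∀ t : ℕ → ℝ,
      (∀ i, t i ∈ D) → (∀ i, T < t i) → Filter.Tendsto t Filter.atTop (nhds T) →
      (∀ i, (n : ℕ∞) ≤ g (t i)) → (n : ℕ∞) ≤ g T) :
    ∀ s ∈ Set.Icc a b, ∀ t ∈ Set.Icc a b, s ≤ t → g t ≤ g s := by
  intro s hs t ht hst
  cases hgs : g s using ENat.recTopCoe with
  | top => exact le_top
  | coe m =>
    exact le_natCast_of_le_of_le_natCast (lowerSemicontinuousOn_of_le_liminf_diff_singleton hlsc)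
      hDacc hlim hs ht hst hgs.le

/-- Abstract content of Theorem 3.3 ("general-theorem"): if `g : [a,b] → ℕ ∪ {∞}` is
lower semicontinuous, `D` accumulates from the right at every `T ∈ [a,b)`, and lower
bounds `g ≥ n` along right sequences from `D` pass to the limit, then `g` is
decreasing on `[a,b]`. -/
theorem stmt4 (a b : ℝ) (hab : a < b) (g : ℝ → ℕ∞) (D : Set ℝ)
    (hD : D ⊆ Set.Icc a b)
    (hlsc : ∀ T ∈ Set.Icc a b,
      g T ≤ Filter.liminf g (nhdsWithin T (Set.Icc a b \ {T})))
    (hDacc : ∀ T ∈ Set.Ico a b, ∀ ε > 0, ∃ t ∈ D, T < t ∧ t < T + ε)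
    (hlim : ∀ T ∈ Set.Icc a b, ∀ n : ℕ, 0 < n → ∀ t : ℕ → ℝ,
      (∀ i, t i ∈ D) → (∀ i, T < t i) → Filter.Tendsto t Filter.atTop (nhds T) →
      (∀ i, (n : ℕ∞) ≤ g (t i)) → (n : ℕ∞) ≤ g T) :
    ∀ s ∈ Set.Icc a b, ∀ t ∈ Set.Icc a b, s ≤ t → g t ≤ g s :=
  stmt4_general a b g D hlsc hDacc hlim
end

section
/- Let γ : ℝ → ℝ³ be a continuous proper map (preimages of compact sets are compact) with γ(0) = q. Then for every R > |q|, the length of γ restricted to the connected component of γ⁻¹(closed ball B̄(0,R)) containing 0 is at least 2(R − |q|). -/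
/-!
The component `[s₁, s₂]` of `γ⁻¹(B̄(0, R))` containing `0` is a compact interval, and neither
endpoint lies in the open set `γ⁻¹(B(0, R))`: otherwise a small interval beyond it would still
lie in the preimage, contradicting maximality of the component. So `|γ(s₁)| = |γ(s₂)| = R`, and
the length on `[s₁, s₂]` is at least `|γ(s₁) - q| + |q - γ(s₂)| ≥ 2(R - |q|)`.
-/

open Set Metric Filter Topology

theorem IsCompact.connectedComponentIn {α : Type*} [TopologicalSpace α] {K : Set α}
    (hK : IsCompact K) (x : α) : IsCompact (connectedComponentIn K x) := by
  by_cases hx : x ∈ K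
  · have : CompactSpace K := isCompact_iff_compactSpace.mp hK
    rw [connectedComponentIn_eq_image hx]
    exact isClosed_connectedComponent.isCompact.image continuous_subtype_val
  · rw [connectedComponentIn_eq_empty hx]
    exact isCompact_empty

theorem connectedComponentIn_mem_nhds_of_mem {α : Type*} [TopologicalSpace α]
    [LocallyConnectedSpace α] {F : Set α} {x y : α} (hy : y ∈ connectedComponentIn F x)
    (hF : F ∈ 𝓝 y) : connectedComponentIn F x ∈ 𝓝 y :=
  connectedComponentIn_eq hy ▸ connectedComponentIn_mem_nhds hF

theorem Real.exists_connectedComponentIn_eq_Icc {K : Set ℝ} (hK : IsCompact K) {x : ℝ}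
    (hx : x ∈ K) :
    ∃ a b, connectedComponentIn K x = Icc a b ∧ a ≤ x ∧ x ≤ b ∧ K ∉ 𝓝 a ∧ K ∉ 𝓝 b := by
  set C := connectedComponentIn K x
  have hC : C = Icc (sInf C) (sSup C) :=
    eq_Icc_of_connected_compact (isConnected_connectedComponentIn_iff.mpr hx)
      (hK.connectedComponentIn x)
  have hxC : x ∈ Icc (sInf C) (sSup C) := hC ▸ mem_connectedComponentIn hx
  have notMem_nhds {y : ℝ} (hyC : y ∈ C) (hy : y ∉ Ioo (sInf C) (sSup C)) : K ∉ 𝓝 y :=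
    fun hK ↦ hy <| by
      rw [← interior_Icc, ← hC, mem_interior_iff_mem_nhds]
      exact connectedComponentIn_mem_nhds_of_mem hyC hK
  have hab : sInf C ≤ sSup C := hxC.1.trans hxC.2
  exact ⟨_, _, hC, hxC.1, hxC.2,
    notMem_nhds (hC.ge (left_mem_Icc.mpr hab)) (fun h ↦ lt_irrefl _ h.1),
    notMem_nhds (hC.ge (right_mem_Icc.mpr hab)) (fun h ↦ lt_irrefl _ h.2)⟩

theorem le_dist_of_preimage_closedBall_notMem_nhds {X E : Type*} [TopologicalSpace X]
    [PseudoMetricSpace E] {f : X → E} {t : X} (hf : ContinuousAt f t) {c : E} {R : ℝ}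
    (ht : f ⁻¹' closedBall c R ∉ 𝓝 t) : R ≤ dist (f t) c := by
  by_contra! h
  exact ht <| mem_of_superset (hf.preimage_mem_nhds (isOpen_ball.mem_nhds (mem_ball.mpr h)))
    (preimage_mono ball_subset_closedBall)

theorem eVariationOn.edist_add_edist_le {α E : Type*} [LinearOrder α] [PseudoEMetricSpace E]
    (f : α → E) {a x b : α} (hax : a ≤ x) (hxb : x ≤ b) :
    edist (f a) (f x) + edist (f x) (f b) ≤ eVariationOn f (Icc a b) := by
  have hx : x ∈ Icc a b := ⟨hax, hxb⟩
  rw [← inter_self (Icc a b), ← eVariationOn.Icc_add_Icc f hax hxb hx]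
  exact add_le_add
    (eVariationOn.edist_le f ⟨left_mem_Icc.mpr (hax.trans hxb), left_mem_Icc.mpr hax⟩
      ⟨hx, right_mem_Icc.mpr hax⟩)
    (eVariationOn.edist_le f ⟨hx, left_mem_Icc.mpr hxb⟩
      ⟨right_mem_Icc.mpr (hax.trans hxb), right_mem_Icc.mpr hxb⟩)

theorem stmt5_general (γ : ℝ → EuclideanSpace ℝ (Fin 3)) (q : EuclideanSpace ℝ (Fin 3))
    (hproper : IsProperMap γ) (h0 : γ 0 = q)
    (R : ℝ) (hR : ‖q‖ < R) :
    ENNReal.ofReal (2 * (R - ‖q‖)) ≤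
      eVariationOn γ (connectedComponentIn (γ ⁻¹' Metric.closedBall 0 R) 0) := by
  have h0K : (0 : ℝ) ∈ γ ⁻¹' closedBall 0 R := by simpa [h0] using hR.le
  obtain ⟨a, b, hab, ha0, h0b, ha, hb⟩ := Real.exists_connectedComponentIn_eq_Icc
    (hproper.isCompact_preimage (isCompact_closedBall 0 R)) h0K
  have le_edist {t : ℝ} (ht : γ ⁻¹' closedBall 0 R ∉ 𝓝 t) :
      ENNReal.ofReal (R - ‖q‖) ≤ edist (γ t) q := by
    have hRt := le_dist_of_preimage_closedBall_notMem_nhds hproper.continuous.continuousAt ht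
    rw [edist_dist]
    refine ENNReal.ofReal_le_ofReal ?_
    linarith [dist_triangle (γ t) q 0, dist_zero_right q]
  rw [hab]
  calc ENNReal.ofReal (2 * (R - ‖q‖))
      = ENNReal.ofReal (R - ‖q‖) + ENNReal.ofReal (R - ‖q‖) := by
        rw [← ENNReal.ofReal_add (by linarith) (by linarith), two_mul]
    _ ≤ edist (γ a) (γ 0) + edist (γ 0) (γ b) := by
        rw [h0, edist_comm q]
        exact add_le_add (le_edist ha) (le_edist hb)
    _ ≤ eVariationOn γ (Icc a b) := eVariationOn.edist_add_edist_le γ ha0 h0b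

/-- Quantitative core of Lemma 6.2 ("bowl-lemma"): a continuous proper curve
`γ : ℝ → ℝ³` with `γ 0 = q` has length at least `2(R - |q|)` on the connected
component of `γ⁻¹(B̄(0,R))` containing `0`, for every `R > |q|`. -/
theorem stmt5 (γ : ℝ → EuclideanSpace ℝ (Fin 3)) (q : EuclideanSpace ℝ (Fin 3))
    (hcont : Continuous γ) (hproper : IsProperMap γ) (h0 : γ 0 = q)
    (R : ℝ) (hR : ‖q‖ < R) :
    ENNReal.ofReal (2 * (R - ‖q‖)) ≤
      eVariationOn γ (connectedComponentIn (γ ⁻¹' Metric.closedBall 0 R) 0) :=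
  stmt5_general γ q hproper h0 R hR
end
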